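/- Let n ≥ 2, let Φ : (0,∞) → (0,∞) be an increasing function, let f ∈ L(𝔾ⁿ) be such that f/h ∉ Φ(L)(𝔾ⁿ) for every h ≥ 1, and let α : (1,∞) → (0,∞). Then there exist a sequence of measurable sets (A_k) and sequences of positive numbers (h_k) and (q_k) such that: (1) A_k ∩ A_m = ∅ for k ≠ m; (2) q_k < h_k ≤ |f(x)| for every k and every x ∈ A_k; (3) q_k → ∞; (4) 0 < |A_k| ≤ α(h_k/q_k) for every k; (5) Σ_{k=1}^∞ Φ(h_k/q_k)·|A_k| = ∞. -/

import Mathlib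

open MeasureTheory Set Filter Topology Metric ENNReal

noncomputable section

/-- Euclidean space `ℝⁿ`. -/
abbrev EucSp (n : ℕ) := EuclideanSpace ℝ (Fin n)

/-- The open unit cube `𝔾ⁿ = (0,1)ⁿ`. -/
def Gcube (n : ℕ) : Set (EucSp n) := {x | ∀ j, x j ∈ Set.Ioo (0:ℝ) 1}

/-- A "basis mapping": to every point it assigns a family of sets. -/
abbrev BasisMap (n : ℕ) := EucSp n → Set (Set (EucSp n))

/-- `B` is a differentiation basis: every `R ∈ B(x)` is a bounded measurable set of positive
measure containing `x`, and `B(x)` contains sets of arbitrarily small diameter. -/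
def IsDiffBasis {n : ℕ} (B : BasisMap n) : Prop :=
  ∀ x : EucSp n,
    (∀ R ∈ B x, x ∈ R ∧ Bornology.IsBounded R ∧ MeasurableSet R ∧ 0 < volume R) ∧
    ∀ ε : ℝ, 0 < ε → ∃ R ∈ B x, Metric.diam R < ε

/-- Translation invariance: `B(x) = {x + I : I ∈ B(0)}`. -/
def IsTIBasis {n : ℕ} (B : BasisMap n) : Prop :=
  ∀ x : EucSp n, B x = (fun I => (fun y => x + y) '' I) '' B 0

/-- The truncated maximal operator `M_B^{(r)} f (x)`. -/
def maxTrunc {n : ℕ} (B : BasisMap n) (r : ℝ) (f : EucSp n → ℝ) (x : EucSp n) : ℝ≥0∞ :=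
  ⨆ (R : Set (EucSp n)) (_ : R ∈ B x ∧ Metric.diam R < r),
    (∫⁻ y in R, ENNReal.ofReal |f y|) / volume R

/-- The (untruncated) maximal operator `M_B f (x)`. -/
def maxOp {n : ℕ} (B : BasisMap n) (f : EucSp n → ℝ) (x : EucSp n) : ℝ≥0∞ :=
  ⨆ (R : Set (EucSp n)) (_ : R ∈ B x), (∫⁻ y in R, ENNReal.ofReal |f y|) / volume R

/-- The upper derivative `D̄_B(∫f, x)` equals `+∞`. -/
def upperDerivInfinite {n : ℕ} (B : BasisMap n) (f : EucSp n → ℝ) (x : EucSp n) : Prop :=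
  ∀ M : ℝ, ∀ δ : ℝ, 0 < δ →
    ∃ R ∈ B x, Metric.diam R < δ ∧ M * (volume R).toReal < ∫ y in R, f y

/-- The family `W_m` of dyadic intervals of order `m`. -/
def dyadicW {n : ℕ} (m : Fin n → ℕ) : Set (Set (EucSp n)) :=
  {S | ∃ k : Fin n → ℤ, S =
    {x : EucSp n | ∀ j, (k j : ℝ) / 2 ^ (m j) < x j ∧ x j < ((k j : ℝ) + 1) / 2 ^ (m j)}}

/-- The family `H_m` of all unions of dyadic intervals of order `m`. -/
def dyadicH {n : ℕ} (m : Fin n → ℕ) : Set (Set (EucSp n)) :=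
  {S | ∃ T ⊆ dyadicW m, S = ⋃₀ T}

/-- `W_m* = {Q ∈ W_m : Q ⊆ 𝔾ⁿ}`. -/
def dyadicWStar {n : ℕ} (m : Fin n → ℕ) : Set (Set (EucSp n)) :=
  {S | S ∈ dyadicW m ∧ S ⊆ Gcube n}

/-- `H_m* = {E ∈ H_m : E ⊆ 𝔾ⁿ}`. -/
def dyadicHStar {n : ℕ} (m : Fin n → ℕ) : Set (Set (EucSp n)) :=
  {S | S ∈ dyadicH m ∧ S ⊆ Gcube n}

/-- An (open) `n`-dimensional interval. -/
def IsOpenInterval {n : ℕ} (Q : Set (EucSp n)) : Prop :=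
  ∃ a b : Fin n → ℝ, Q = {x : EucSp n | ∀ j, a j < x j ∧ x j < b j}

/-- The function `h·χ_E`. -/
def indFun {n : ℕ} (E : Set (EucSp n)) (h : ℝ) : EucSp n → ℝ :=
  E.indicator fun _ => h

/-- The `M_Φ`-property with the given constants `c` and `c(·)`. -/
def MPhiPropertyWith {n : ℕ} (Λ : Set (BasisMap n)) (Φ : ℝ → ℝ) (c : ℝ) (ch : ℝ → ℝ) : Prop :=
  ∀ h : ℝ, 1 < h → ∀ ε : ℝ, 0 < ε →
    ∃ (E : Set (EucSp n)) (P : BasisMap n → Set (EucSp n)) (Q : Set (EucSp n)),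
      MeasurableSet E ∧ 0 < volume E ∧ IsOpenInterval Q ∧
      (∀ B ∈ Λ, P B ⊆ {x | 1 < maxTrunc B ε (indFun E h) x}) ∧
      (∃ m : Fin n → ℕ, ∀ B ∈ Λ, P B ∈ dyadicH m) ∧
      (∀ B ∈ Λ, ENNReal.ofReal (c * Φ h) * volume E ≤ volume (P B)) ∧
      E ⊆ Q ∧ (∀ B ∈ Λ, P B ⊆ Q) ∧ Metric.diam Q < ε ∧
      ENNReal.ofReal (ch h) * volume Q ≤ volume E

/-- The `M_Φ`-property. -/
def MPhiProperty {n : ℕ} (Λ : Set (BasisMap n)) (Φ : ℝ → ℝ) : Prop :=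
  ∃ c : ℝ, 0 < c ∧ ∃ ch : ℝ → ℝ, (∀ h : ℝ, 1 < h → ch h ∈ Set.Ioo (0:ℝ) 1) ∧
    MPhiPropertyWith Λ Φ c ch

/-- `f ∈ L(𝔾ⁿ)`: integrable and supported in the unit cube. -/
def MemL {n : ℕ} (f : EucSp n → ℝ) : Prop :=
  Integrable f ∧ {x | f x ≠ 0} ⊆ Gcube n

/-- `Φ` is non-regular: `limsup_{t→∞} Φ(t)/t = ∞`. -/
def NonRegular (Φ : ℝ → ℝ) : Prop :=
  ∀ M T : ℝ, ∃ t : ℝ, T < t ∧ 0 < t ∧ M * t < Φ t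

/-- `Φ` satisfies the `Δ₂`-condition at infinity. -/
def Delta2 (Φ : ℝ → ℝ) : Prop :=
  ∃ c τ : ℝ, 0 < c ∧ 0 < τ ∧ ∀ t : ℝ, τ < t → Φ (2 * t) ≤ c * Φ t

/-- The `γ`-rotated basis `B(γ)`. -/
def rotateBasis {n : ℕ} (B : BasisMap n) (γ : EucSp n ≃ₗᵢ[ℝ] EucSp n) : BasisMap n :=
  fun x => (fun R => (fun y => x + γ (y - x)) '' R) '' B x

/-- `γ` is a rotation (orientation-preserving linear isometry). -/
def IsRotation {n : ℕ} (γ : EucSp n ≃ₗᵢ[ℝ] EucSp n) : Prop :=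
  LinearMap.det (γ.toLinearEquiv : EucSp n →ₗ[ℝ] EucSp n) = 1

/-- The function `Φ_B(h) = lim_{t→∞} limsup_{r→0} |{M_B^{(tr)}(hχ_{V_r}) > 1}| / |V_r|`. -/
def PhiB {n : ℕ} (B : BasisMap n) (h : ℝ) : ℝ≥0∞ :=
  Filter.limsup (fun t : ℝ =>
    Filter.limsup (fun r : ℝ =>
      volume {x : EucSp n | 1 < maxTrunc B (t * r) (indFun (Metric.ball (0 : EucSp n) r) h) x}
        / volume (Metric.ball (0 : EucSp n) r)) (𝓝[>] (0:ℝ))) Filter.atTop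

/-- The basis `𝐈ₙᵏ` of intervals with at most `k` distinct edge lengths. -/
def baseInk (n k : ℕ) : BasisMap n := fun x =>
  {R | ∃ a b : Fin n → ℝ,
    R = {y : EucSp n | ∀ j, a j < y j ∧ y j < b j} ∧ (∀ j, a j < x j ∧ x j < b j) ∧
    (Finset.image (fun j => b j - a j) Finset.univ).card ≤ k}

/-- `f` belongs to the Orlicz class `ψ(L)(𝔾ⁿ)`. -/
def MemPsiL {n : ℕ} (ψ : ℝ → ℝ) (f : EucSp n → ℝ) : Prop :=
  Measurable f ∧ {x | f x ≠ 0} ⊆ Gcube n ∧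
    ∫⁻ x in {x | f x ≠ 0}, ENNReal.ofReal (ψ |f x|) < ⊤

/-- The Luxemburg distance on `ψ(L)(𝔾ⁿ)`. -/
def luxDist {n : ℕ} (ψ : ℝ → ℝ) (f g : EucSp n → ℝ) : ℝ :=
  sInf {lam : ℝ | 0 < lam ∧
    ∫⁻ x in {x | f x ≠ g x}, ENNReal.ofReal (ψ (|f x - g x| / lam)) ≤ 1}

/-- `f ∈ S_{Δ(B)}`: an integrable function supported in `𝔾ⁿ` whose integral has upper
derivative `+∞` a.e. on `𝔾ⁿ` with respect to every rotation of `B`. -/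
def MemSDeltaB {n : ℕ} (B : BasisMap n) (f : EucSp n → ℝ) : Prop :=
  Integrable f ∧ {x | f x ≠ 0} ⊆ Gcube n ∧
    ∀ γ : EucSp n ≃ₗᵢ[ℝ] EucSp n, IsRotation γ →
      ∀ᵐ x ∂(volume : Measure (EucSp n)), x ∈ Gcube n →
        upperDerivInfinite (rotateBasis B γ) f x

/-- `T` is of the first Baire category in the space `ψ(L)(𝔾ⁿ)` with the Luxemburg metric:
`T` is a countable union of sets `F k`, each of which is nowhere dense (every ball of the
space contains a ball disjoint from `F k`). -/
def FirstCategoryInPsiL {n : ℕ} (ψ : ℝ → ℝ) (T : Set (EucSp n → ℝ)) : Prop :=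
  ∃ F : ℕ → Set (EucSp n → ℝ), T ⊆ (⋃ k, F k) ∧
    ∀ k : ℕ, ∀ f : EucSp n → ℝ, MemPsiL ψ f → ∀ ε : ℝ, 0 < ε →
      ∃ g : EucSp n → ℝ, MemPsiL ψ g ∧ luxDist ψ f g < ε ∧
        ∃ δ : ℝ, 0 < δ ∧ ∀ u : EucSp n → ℝ, MemPsiL ψ u → luxDist ψ g u < δ → u ∉ F k

/-!
Cut `{f ≠ 0}` into the dyadic shells `D m = {2^(m+1) ≤ |f| < 2^(m+2)}`. Because `f / h ∉ Φ(L)`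
for every `h ≥ 1`, for each fixed `j` the series `∑ₘ Φ(2^(m+1)/(j+1)) |D m|` diverges (the part
of `{f ≠ 0}` where `|f| < 2` contributes only a finite amount), and so do all its tails. Hence
`ℕ` can be cut into consecutive finite blocks, block `j` carrying mass `≥ 1` in the series with
divisor `j + 1`; giving the levels of block `j` the value `q = j + 1` keeps the series divergent
while `q → ∞`. Finally each shell is chopped along a fine grid of cubes into finitely many pieces
of measure at most `α(h/q)`, and all pieces are enumerated.
-/

section Partition

variable {X : Type*} [MeasurableSpace X] {μ : Measure X}

theorem exists_finset_partition_of_fibers {κ : Type*} [MeasurableSpace κ]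
    [MeasurableSingletonClass κ] {s : Set X} (hs : MeasurableSet s) {φ : X → κ}
    (hφ : Measurable φ) {F : Finset κ} (hsF : s ⊆ φ ⁻¹' F) {ε : ℝ≥0∞}
    (hε : ∀ c, μ (φ ⁻¹' {c} ∩ s) ≤ ε) :
    ∃ P : Finset (Set X), (∀ t ∈ P, MeasurableSet t ∧ t ⊆ s ∧ 0 < μ t ∧ μ t ≤ ε) ∧
      (P : Set (Set X)).PairwiseDisjoint id ∧ ∑ t ∈ P, μ t = μ s := by
  classical
  set piece : κ → Set X := fun c => φ ⁻¹' {c} ∩ s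
  have hpiece : ∀ c, MeasurableSet (piece c) := fun c => (hφ (measurableSet_singleton c)).inter hs
  refine ⟨(F.filter fun c => μ (piece c) ≠ 0).image piece, ?_, ?_, ?_⟩
  · simp only [Finset.mem_image, Finset.mem_filter]
    rintro _ ⟨c, ⟨-, hc⟩, rfl⟩
    exact ⟨hpiece c, inter_subset_right, pos_iff_ne_zero.2 hc, hε c⟩
  · simp only [Finset.coe_image]
    rintro _ ⟨c, -, rfl⟩ _ ⟨c', -, rfl⟩ hne
    have hcc : c ≠ c' := fun h => hne (h ▸ rfl)
    exact ((disjoint_singleton.2 hcc).preimage φ).mono inter_subset_left inter_subset_left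
  · have hinj : Set.InjOn piece (F.filter fun c => μ (piece c) ≠ 0) := by
      intro c hc c' _ heq
      obtain ⟨x, hx⟩ := nonempty_of_measure_ne_zero (Finset.mem_filter.1 hc).2
      have hx' : x ∈ piece c' := heq ▸ hx
      exact hx.1.symm.trans hx'.1
    rw [Finset.sum_image hinj, Finset.sum_filter_ne_zero]
    have := sum_measure_preimage_singleton (μ := μ.restrict s) F
      (fun c _ => hφ (measurableSet_singleton c))
    simpa only [Measure.restrict_apply (hφ (measurableSet_singleton _)),
      Measure.restrict_apply (hφ F.measurableSet), inter_eq_right.2 hsF] using this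

end Partition

theorem volume_setOf_forall_mem {n : ℕ} (s : Fin n → Set ℝ) :
    volume {x : EucSp n | ∀ i, x i ∈ s i} = ∏ i, volume (s i) := by
  rw [← volume_pi_pi, ← (EuclideanSpace.volume_preserving_symm_measurableEquiv_toLp
    (Fin n)).measure_preimage_equiv]
  congr 1 with x
  exact mem_univ_pi.symm

theorem volume_Gcube (n : ℕ) : volume (Gcube n) = 1 := by
  rw [Gcube, volume_setOf_forall_mem]
  simp

theorem volume_ne_top_of_subset_Gcube {n : ℕ} {s : Set (EucSp n)} (hs : s ⊆ Gcube n) :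
    volume s ≠ ⊤ :=
  ne_top_of_le_ne_top (by simp [volume_Gcube]) (measure_mono hs)

theorem exists_finset_partition_of_subset_Gcube {n : ℕ} (hn : 0 < n) {s : Set (EucSp n)}
    (hs : MeasurableSet s) (hsG : s ⊆ Gcube n) {ε : ℝ≥0∞} (hε : 0 < ε) :
    ∃ P : Finset (Set (EucSp n)),
      (∀ t ∈ P, MeasurableSet t ∧ t ⊆ s ∧ 0 < volume t ∧ volume t ≤ ε) ∧
      (P : Set (Set (EucSp n))).PairwiseDisjoint id ∧ ∑ t ∈ P, volume t = volume s := by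
  obtain ⟨K, hK⟩ := ENNReal.exists_inv_nat_lt hε.ne'
  have hK1 : (1 : ℝ) ≤ K := by
    rcases K with _ | K
    · simp at hK
    · simp
  have hK0 : (0 : ℝ) < K := by linarith
  refine exists_finset_partition_of_fibers hs (φ := fun x i => ⌊K * x i⌋)
    (F := Fintype.piFinset fun _ => Finset.Ico 0 (K : ℤ)) (by fun_prop) ?_ fun c => ?_
  · intro x hx
    simp only [mem_preimage, Finset.mem_coe, Fintype.mem_piFinset, Finset.mem_Ico]
    intro i
    obtain ⟨h0, h1⟩ := hsG hx i
    exact ⟨Int.floor_nonneg.2 (by positivity), Int.floor_lt.2 (by push_cast; nlinarith)⟩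
  have hcell : (fun x : EucSp n => fun i => ⌊K * x i⌋) ⁻¹' {c} ∩ s ⊆
      {x | ∀ i, x i ∈ Ico ((c i : ℝ) / K) ((c i + 1) / K)} := by
    intro x ⟨hx, _⟩ i
    have := Int.floor_eq_iff.1 (congrFun hx i)
    rw [mem_Ico, div_le_iff₀ hK0, lt_div_iff₀ hK0]
    constructor <;> linarith [this.1, this.2]
  calc volume _ ≤ volume {x : EucSp n | ∀ i, x i ∈ Ico ((c i : ℝ) / K) ((c i + 1) / K)} :=
        measure_mono hcell
    _ = ENNReal.ofReal (K : ℝ)⁻¹ ^ n := by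
        have hside : ∀ i, (c i + 1 : ℝ) / K - c i / K = (K : ℝ)⁻¹ := fun i => by ring
        simp only [volume_setOf_forall_mem, Real.volume_Ico, hside, Finset.prod_const,
          Finset.card_univ, Fintype.card_fin]
    _ ≤ ENNReal.ofReal (K : ℝ)⁻¹ :=
        pow_le_of_le_one zero_le (ENNReal.ofReal_le_one.2 (inv_le_one_of_one_le₀ hK1))
          hn.ne'
    _ ≤ ε := by
        rw [ENNReal.ofReal_inv_of_pos hK0, ENNReal.ofReal_natCast]
        exact hK.le

section Levels

variable {X : Type*}

/-- Shells start at `2` rather than `1`: then the height `h = 2 ^ (m + 1)` of shell `m` exceeds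
every divisor `q ≤ m + 1`, as the diagonal step requires. -/
def dyadicShell (g : X → ℝ) (m : ℕ) : Set X :=
  (fun x => |g x|) ⁻¹' Ico (2 ^ (m + 1)) (2 ^ (m + 2))

theorem pairwise_disjoint_dyadicShell (g : X → ℝ) :
    Pairwise (Function.onFun Disjoint (dyadicShell g)) :=
  fun _ _ h => ((Monotone.pairwise_disjoint_on_Ico_succ (f := fun m : ℕ => (2 : ℝ) ^ (m + 1))
    fun _ _ h => pow_le_pow_right₀ one_le_two (by omega)) h).preimage _

theorem dyadicShell_subset_ne_zero (g : X → ℝ) (m : ℕ) :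
    dyadicShell g m ⊆ {x | g x ≠ 0} := fun x hx h0 => by
  have := hx.1
  simp only [h0, abs_zero] at this
  exact (pow_pos two_pos (m + 1)).not_ge this

theorem subset_union_dyadicShell (g : X → ℝ) :
    {x | g x ≠ 0} ⊆ {x | g x ≠ 0 ∧ |g x| < 2} ∪ ⋃ m, dyadicShell g m := by
  intro x hx
  by_cases h2 : |g x| < 2
  · exact Or.inl ⟨hx, h2⟩
  · obtain ⟨m, hm⟩ := exists_nat_pow_near (x := |g x| / 2) (by linarith) one_lt_two
    refine Or.inr (mem_iUnion.2 ⟨m, ?_, ?_⟩) <;> simp only [pow_succ] at hm ⊢ <;> linarith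

variable [MeasurableSpace X] {μ : Measure X}

theorem AEMeasurable.exists_measurable_eq_of_ne_zero {β : Type*} [Zero β] [MeasurableSpace β]
    {f : X → β} (hf : AEMeasurable f μ) :
    ∃ g : X → β, Measurable g ∧ f =ᵐ[μ] g ∧ ∀ x, g x ≠ 0 → f x = g x := by
  set N := toMeasurable μ {x | f x ≠ hf.mk f x}
  have hN : μ N = 0 := by rw [measure_toMeasurable]; exact ae_iff.1 hf.ae_eq_mk
  refine ⟨Nᶜ.indicator (hf.mk f),
    hf.measurable_mk.indicator (measurableSet_toMeasurable _ _).compl, ?_, fun x hx => ?_⟩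
  · filter_upwards [hf.ae_eq_mk, measure_eq_zero_iff_ae_notMem.1 hN] with x hx hxN
    rw [indicator_of_mem hxN, hx]
  · have hxN : x ∈ Nᶜ := by
      by_contra h
      exact hx (indicator_of_notMem h _)
    rw [indicator_of_mem hxN]
    by_contra hne
    exact hxN (subset_toMeasurable _ _ hne)

theorem setLIntegral_ne_zero_congr_ae {β : Type*} [Zero β] {f g : X → β} (hfg : f =ᵐ[μ] g)
    (F : β → ℝ≥0∞) :
    ∫⁻ x in {x | f x ≠ 0}, F (f x) ∂μ = ∫⁻ x in {x | g x ≠ 0}, F (g x) ∂μ := by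
  have hset : {x | f x ≠ 0} =ᵐ[μ] {x | g x ≠ 0} := hfg.fun_comp (· ≠ 0)
  rw [Measure.restrict_congr_set hset]
  exact lintegral_congr_ae (ae_restrict_of_ae (hfg.fun_comp F))

theorem measurableSet_dyadicShell {g : X → ℝ} (hg : Measurable g) (m : ℕ) :
    MeasurableSet (dyadicShell g m) :=
  hg.abs measurableSet_Ico

theorem tsum_dyadicShell_eq_top {g : X → ℝ} (hfin : μ {x | g x ≠ 0} ≠ ⊤)
    {Φ : ℝ → ℝ} (hΦ : MonotoneOn Φ (Ioi 0)) {c : ℝ} (hc : 1 ≤ c)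
    (htop : ∫⁻ x in {x | g x ≠ 0}, ENNReal.ofReal (Φ (|g x| / (2 * c))) ∂μ = ⊤) :
    ∑' m : ℕ, ENNReal.ofReal (Φ (2 ^ (m + 1) / c)) * μ (dyadicShell g m) = ⊤ := by
  have hc0 : 0 < c := by linarith
  set F := fun x => ENNReal.ofReal (Φ (|g x| / (2 * c)))
  set low := {x | g x ≠ 0 ∧ |g x| < 2}
  have hlow : ∫⁻ x in low, F x ∂μ ≤ ENNReal.ofReal (Φ 1) * μ {x | g x ≠ 0} := by
    refine (setLIntegral_mono (g := fun _ => ENNReal.ofReal (Φ 1)) measurable_const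
      fun x hx => ?_).trans ?_
    · have hgx := abs_pos.2 hx.1
      exact ENNReal.ofReal_le_ofReal (hΦ (mem_Ioi.2 (by positivity)) (mem_Ioi.2 one_pos)
        ((div_le_one (by positivity)).2 (by linarith [hx.2])))
    · rw [setLIntegral_const]
      exact mul_le_mul_right (measure_mono fun x hx => hx.1) _
  have hshell : ∀ m : ℕ, ∫⁻ x in dyadicShell g m, F x ∂μ ≤
      ENNReal.ofReal (Φ (2 ^ (m + 1) / c)) * μ (dyadicShell g m) := by
    intro m
    refine (setLIntegral_mono measurable_const fun x hx => ?_).trans_eq (setLIntegral_const _ _)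
    have hgx : (2 : ℝ) ^ (m + 1) ≤ |g x| := hx.1
    have hgx' : |g x| < 2 * 2 ^ (m + 1) := by rw [← pow_succ']; exact hx.2
    have hgx0 : 0 < |g x| := lt_of_lt_of_le (by positivity) hgx
    refine ENNReal.ofReal_le_ofReal (hΦ (mem_Ioi.2 (by positivity)) (mem_Ioi.2 (by positivity)) ?_)
    rw [div_le_div_iff₀ (by positivity) (by positivity)]
    nlinarith
  have : ⊤ ≤ ENNReal.ofReal (Φ 1) * μ {x | g x ≠ 0} +
      ∑' m : ℕ, ENNReal.ofReal (Φ (2 ^ (m + 1) / c)) * μ (dyadicShell g m) :=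
    calc ⊤ = ∫⁻ x in {x | g x ≠ 0}, F x ∂μ := htop.symm
      _ ≤ ∫⁻ x in low ∪ ⋃ m, dyadicShell g m, F x ∂μ :=
        lintegral_mono_set (subset_union_dyadicShell g)
      _ ≤ ∫⁻ x in low, F x ∂μ + ∑' m, ∫⁻ x in dyadicShell g m, F x ∂μ :=
        (lintegral_union_le _ _ _).trans (add_le_add le_rfl (lintegral_iUnion_le _ _))
      _ ≤ _ := add_le_add hlow (ENNReal.tsum_le_tsum hshell)
  exact (ENNReal.add_eq_top.1 (top_le_iff.1 this)).resolve_left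
    (ENNReal.mul_ne_top ENNReal.ofReal_ne_top hfin)

end Levels

theorem exists_lt_one_le_sum_Ico {T : ℕ → ℝ≥0∞} (hT : ∑' m, T m = ⊤) (hfin : ∀ m, T m ≠ ⊤)
    (M : ℕ) : ∃ M', M < M' ∧ 1 ≤ ∑ m ∈ Finset.Ico M M', T m := by
  rw [← ENNReal.summable.sum_add_tsum_nat_add' (k := M)] at hT
  have htail := (ENNReal.add_eq_top.1 hT).resolve_left (ENNReal.sum_ne_top.2 fun m _ => hfin m)
  obtain ⟨k, hk⟩ : ∃ k, 1 < ∑ i ∈ Finset.range k, T (i + M) := by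
    rw [← lt_iSup_iff, ← ENNReal.tsum_eq_iSup_nat, htail]
    exact ENNReal.one_lt_top
  have hk0 : k ≠ 0 := by
    rintro rfl
    simp at hk
  refine ⟨M + k, by omega, ?_⟩
  rw [Finset.sum_Ico_eq_sum_range, add_tsub_cancel_left]
  simpa only [add_comm M] using hk.le

theorem exists_tendsto_tsum_diagonal_eq_top {T : ℕ → ℕ → ℝ≥0∞} (hT : ∀ j, ∑' m, T j m = ⊤)
    (hfin : ∀ j m, T j m ≠ ⊤) :
    ∃ r : ℕ → ℕ, (∀ m, r m ≤ m) ∧ Tendsto r atTop atTop ∧ ∑' m, T (r m) m = ⊤ := by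
  choose next hnext hblock using fun j => exists_lt_one_le_sum_Ico (hT j) (hfin j)
  -- `N j` are the block boundaries and `r m` is the index of the block `[N j, N (j + 1))` of `m`.
  let N : ℕ → ℕ := fun j => Nat.rec 0 (fun j Nj => next j Nj) j
  have hN : StrictMono N := strictMono_nat_of_lt_succ fun j => hnext j (N j)
  have hex : ∀ m, ∃ j, m < N (j + 1) := fun m => ⟨m, hN.id_le (m + 1)⟩
  let r : ℕ → ℕ := fun m => Nat.find (hex m)
  have hr_ge : ∀ j m, N j ≤ m → j ≤ r m := fun j m hm =>
    (Nat.le_find_iff _ _).2 fun i hi => not_lt.2 ((hN.monotone hi).trans hm)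
  have hr_block : ∀ j, ∀ m ∈ Finset.Ico (N j) (N (j + 1)), r m = j := fun j m hm =>
    le_antisymm (Nat.find_min' _ (Finset.mem_Ico.1 hm).2) (hr_ge j m (Finset.mem_Ico.1 hm).1)
  have hpartial : ∀ J : ℕ, (J : ℝ≥0∞) ≤ ∑ m ∈ Finset.range (N J), T (r m) m := by
    intro J
    induction J with
    | zero => simp
    | succ J ih =>
      have hJ : ∑ m ∈ Finset.Ico (N J) (N (J + 1)), T (r m) m =
          ∑ m ∈ Finset.Ico (N J) (N (J + 1)), T J m :=
        Finset.sum_congr rfl fun m hm => by rw [hr_block J m hm]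
      rw [← Finset.sum_range_add_sum_Ico _ (hN.monotone J.le_succ), hJ, Nat.cast_succ]
      exact add_le_add ih (hblock J (N J))
  refine ⟨r, fun m => Nat.find_min' _ (hN.id_le (m + 1)),
    tendsto_atTop_atTop.2 fun J => ⟨N J, hr_ge J⟩, ?_⟩
  by_contra hne
  obtain ⟨J, hJ⟩ := ENNReal.exists_nat_gt hne
  exact ((hpartial J).trans (ENNReal.sum_le_tsum _)).not_gt hJ

theorem infinite_of_tsum_eq_top {ι : Type*} {w : ι → ℝ≥0∞} (hw : ∀ i, w i ≠ ⊤)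
    (h : ∑' i, w i = ⊤) : Infinite ι := by
  by_contra hfin
  have : Fintype ι := @Fintype.ofFinite ι (not_infinite_iff_finite.1 hfin)
  rw [tsum_fintype] at h
  exact ENNReal.sum_ne_top.2 (fun i _ => hw i) h

theorem exists_seq_refinement_tsum_eq_top {n : ℕ} (hn : 0 < n) {D : ℕ → Set (EucSp n)}
    (hD : ∀ m, MeasurableSet (D m)) (hDG : ∀ m, D m ⊆ Gcube n)
    (hdisj : Pairwise (Function.onFun Disjoint D)) {ε w : ℕ → ℝ≥0∞} (hε : ∀ m, 0 < ε m)
    (hw : ∀ m, w m ≠ ⊤) (hsum : ∑' m, w m * volume (D m) = ⊤) :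
    ∃ (A : ℕ → Set (EucSp n)) (level : ℕ → ℕ), Tendsto level atTop atTop ∧
      Pairwise (Function.onFun Disjoint A) ∧
      (∀ k, MeasurableSet (A k) ∧ A k ⊆ D (level k) ∧
        0 < volume (A k) ∧ volume (A k) ≤ ε (level k)) ∧
      ∑' k, w (level k) * volume (A k) = ⊤ := by
  choose P hP hPdisj hPsum using fun m =>
    exists_finset_partition_of_subset_Gcube hn (hD m) (hDG m) (hε m)
  let I := Σ m, {t // t ∈ P m}
  let W : I → ℝ≥0∞ := fun i => w i.1 * volume (i.2 : Set (EucSp n))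
  have hW : ∀ i, W i ≠ ⊤ := fun ⟨m, t, ht⟩ => ENNReal.mul_ne_top (hw m)
    (volume_ne_top_of_subset_Gcube ((hP m t ht).2.1.trans (hDG m)))
  have hWsum : ∑' i, W i = ⊤ := by
    rw [ENNReal.tsum_sigma', ← hsum]
    refine tsum_congr fun m => ?_
    change ∑' t : {t // t ∈ P m}, w m * volume (t : Set (EucSp n)) = _
    rw [ENNReal.tsum_mul_left, Finset.tsum_subtype (P m) fun t => volume t, hPsum m]
  have := infinite_of_tsum_eq_top hW hWsum
  let e : ℕ ≃ I := (nonempty_denumerable I).some.eqv.symm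
  have hdisjI : Pairwise (Function.onFun Disjoint fun i : I => (i.2 : Set (EucSp n))) := by
    rintro ⟨m, t, ht⟩ ⟨m', t', ht'⟩ hne
    by_cases hm : m = m'
    · subst hm
      exact hPdisj m ht ht' fun h => hne (by subst h; rfl)
    · exact (hdisj hm).mono (hP m t ht).2.1 (hP m' t' ht').2.1
  have hfst : Tendsto (Sigma.fst : I → ℕ) cofinite cofinite :=
    Tendsto.cofinite_of_finite_preimage_singleton fun m =>
      (Set.finite_range fun t : {t // t ∈ P m} => (⟨m, t⟩ : I)).subset
        (by rintro ⟨m', t⟩ (rfl : m' = m); exact ⟨t, rfl⟩)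
  refine ⟨fun k => (e k).2, fun k => (e k).1, ?_, fun k k' hk => hdisjI (e.injective.ne hk),
    fun k => ?_, ?_⟩
  · rw [← Nat.cofinite_eq_atTop]
    exact hfst.comp e.injective.tendsto_cofinite
  · exact hP _ _ (e k).2.2
  · rw [← hWsum]
    exact e.tsum_eq W

theorem natCast_add_one_lt_two_pow_succ {j m : ℕ} (h : j ≤ m) : (j : ℝ) + 1 < 2 ^ (m + 1) := by
  exact_mod_cast (Nat.lt_two_pow_self (n := m + 1)).trans_le' (by omega)

theorem stmt5_general {n : ℕ} (hn : 2 ≤ n)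
    (Φ : ℝ → ℝ) (hΦmono : MonotoneOn Φ (Set.Ioi 0))
    (f : EucSp n → ℝ) (hf : MemL f)
    (hnot : ∀ h : ℝ, 1 ≤ h → ∫⁻ x in {x | f x ≠ 0}, ENNReal.ofReal (Φ (|f x| / h)) = ⊤)
    (α : ℝ → ℝ) (hα : ∀ t : ℝ, 1 < t → 0 < α t) :
    ∃ (A : ℕ → Set (EucSp n)) (h q : ℕ → ℝ),
      (∀ k, MeasurableSet (A k)) ∧
      (∀ k m, k ≠ m → A k ∩ A m = ∅) ∧
      (∀ k, 0 < q k) ∧ (∀ k, q k < h k) ∧ (∀ k, ∀ x ∈ A k, h k ≤ |f x|) ∧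
      Filter.Tendsto q Filter.atTop Filter.atTop ∧
      (∀ k, 0 < volume (A k) ∧ volume (A k) ≤ ENNReal.ofReal (α (h k / q k))) ∧
      (∑' k, ENNReal.ofReal (Φ (h k / q k)) * volume (A k)) = ⊤ := by
  obtain ⟨g, hg, hfg, hgf⟩ := hf.1.aemeasurable.exists_measurable_eq_of_ne_zero
  have hgG : {x | g x ≠ 0} ⊆ Gcube n := fun x hx => hf.2 (show f x ≠ 0 from hgf x hx ▸ hx)
  have hDG : ∀ m, dyadicShell g m ⊆ Gcube n := fun m => (dyadicShell_subset_ne_zero g m).trans hgG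
  have hT : ∀ j : ℕ, ∑' m : ℕ, ENNReal.ofReal (Φ (2 ^ (m + 1) / (j + 1))) *
      volume (dyadicShell g m) = ⊤ := fun j => by
    have hj : (1 : ℝ) ≤ j + 1 := le_add_of_nonneg_left j.cast_nonneg
    refine tsum_dyadicShell_eq_top (volume_ne_top_of_subset_Gcube hgG) hΦmono hj ?_
    rw [← setLIntegral_ne_zero_congr_ae hfg fun y => ENNReal.ofReal (Φ (|y| / (2 * (j + 1))))]
    exact hnot _ (by linarith)
  obtain ⟨r, hr, hr_tendsto, hr_sum⟩ := exists_tendsto_tsum_diagonal_eq_top hT fun j m =>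
    ENNReal.mul_ne_top ENNReal.ofReal_ne_top (volume_ne_top_of_subset_Gcube (hDG m))
  obtain ⟨A, level, hlevel, hdisj, hA, hAsum⟩ := exists_seq_refinement_tsum_eq_top (by omega)
    (measurableSet_dyadicShell hg) hDG (pairwise_disjoint_dyadicShell g)
    (ε := fun m => ENNReal.ofReal (α (2 ^ (m + 1) / (r m + 1))))
    (fun m => ENNReal.ofReal_pos.2 (hα _ ((one_lt_div (by positivity)).2
      (natCast_add_one_lt_two_pow_succ (hr m)))))
    (fun m => ENNReal.ofReal_ne_top) hr_sum
  refine ⟨A, fun k => 2 ^ (level k + 1), fun k => r (level k) + 1, fun k => (hA k).1,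
    fun k k' hk => disjoint_iff_inter_eq_empty.1 (hdisj hk), fun k => by positivity,
    fun k => natCast_add_one_lt_two_pow_succ (hr _), fun k x hx => ?_,
    tendsto_atTop_add_const_right _ _
      (tendsto_natCast_atTop_atTop.comp (hr_tendsto.comp hlevel)),
    fun k => (hA k).2.2, hAsum⟩
  have hx' := (hA k).2.1 hx
  rw [hgf x (dyadicShell_subset_ne_zero g _ hx')]
  exact hx'.1

theorem stmt5 {n : ℕ} (hn : 2 ≤ n)
    (Φ : ℝ → ℝ) (hΦmono : MonotoneOn Φ (Set.Ioi 0)) (hΦpos : ∀ t : ℝ, 0 < t → 0 < Φ t)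
    (f : EucSp n → ℝ) (hf : MemL f)
    (hnot : ∀ h : ℝ, 1 ≤ h → ∫⁻ x in {x | f x ≠ 0}, ENNReal.ofReal (Φ (|f x| / h)) = ⊤)
    (α : ℝ → ℝ) (hα : ∀ t : ℝ, 1 < t → 0 < α t) :
    ∃ (A : ℕ → Set (EucSp n)) (h q : ℕ → ℝ),
      (∀ k, MeasurableSet (A k)) ∧
      (∀ k m, k ≠ m → A k ∩ A m = ∅) ∧
      (∀ k, 0 < q k) ∧ (∀ k, q k < h k) ∧ (∀ k, ∀ x ∈ A k, h k ≤ |f x|) ∧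
      Filter.Tendsto q Filter.atTop Filter.atTop ∧
      (∀ k, 0 < volume (A k) ∧ volume (A k) ≤ ENNReal.ofReal (α (h k / q k))) ∧
      (∑' k, ENNReal.ofReal (Φ (h k / q k)) * volume (A k)) = ⊤ :=
  stmt5_general hn Φ hΦmono f hf hnot α hα

end
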